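/- The four-step SUB gadget of the membrane-creation construction is correct: starting from configuration c l_i d in the skin with k copies of a_r, after four steps the system reaches configuration c l_j d with k−1 copies of a_r if k ≥ 1, or configuration c l_k d with zero copies of a_r if k = 0, with no other objects remaining and at most two membranes existing at any intermediate time. -/

import Mathlib

attribute [local instance 5] Classical.propDecidable

/-- Targets for rules of P systems with membrane creation. -/
inductive MTgt : Type
  | here | out | inj (j : ℕ)

/-- Rules of a catalytic P system with membrane creation (`c` denotes the single
catalyst): non-cooperative evolution rules `a → (u, tar)` (`cata = false`),
catalytic evolution rules `c a → c (u, tar)` (`cata = true`), catalytic membrane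
creation rules `c a → c [ u ]_lbl`, and membrane dissolution rules `a → u δ`. -/
inductive MCreRule (O : Type) : Type
  | evo (cata : Bool) (a : O) (u : Multiset O) (tar : MTgt)
  | create (a : O) (lbl : ℕ) (u : Multiset O)
  | diss (a : O) (u : Multiset O)

/-- A P system with membrane creation, one catalyst, starting with one membrane
(the skin, which carries label 1 and is never dissolved); `R i` is the (finite)
set of rules associated with membranes labeled `i`. -/
structure MCreSystem (O : Type) where
  cat : O
  R : ℕ → Set (MCreRule O)
  w0 : Multiset O

/-- A configuration: the skin contents, the list of inner membranes (label and
contents; membranes at most one level deep, as in computations using at most two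
membranes), and the environment contents. -/
abbrev MCfg (O : Type) := Multiset O × List (ℕ × Multiset O) × Multiset O

variable {O : Type} [DecidableEq O]

/-- The multiset consumed by one application of a rule. -/
def mlhs (c : O) : MCreRule O → Multiset O
  | MCreRule.evo ca a _ _ => if ca then {c, a} else {a}
  | MCreRule.create a _ _ => {c, a}
  | MCreRule.diss a _ => {a}

/-- The rule is a dissolution rule. -/
def isDiss {O : Type} : MCreRule O → Prop
  | MCreRule.diss _ _ => True
  | _ => False

/-- The multiset produced in the membrane where the rule is applied
(the catalyst never moves). -/
def hereProd (c : O) : MCreRule O → Multiset O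
  | MCreRule.evo ca _ u tar =>
      (match tar with | MTgt.here => u | _ => 0) + (if ca then {c} else 0)
  | MCreRule.create _ _ _ => {c}
  | MCreRule.diss _ u => u

/-- The multiset sent to the surrounding region. -/
def outProd : MCreRule O → Multiset O
  | MCreRule.evo _ _ u MTgt.out => u
  | _ => 0

/-- The multiset sent to the chosen inner membrane (for rules with target `in_j`). -/
def inProd : MCreRule O → Multiset O
  | MCreRule.evo _ _ u (MTgt.inj _) => u
  | _ => 0

/-- The membranes created by one application of the rule. -/
def createdOf : MCreRule O → Multiset (ℕ × Multiset O)
  | MCreRule.create _ l u => {(l, u)}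
  | _ => 0

/-- One maximally parallel step of the P system with membrane creation. -/
def MStep (Q : MCreSystem O) : MCfg O → MCfg O → Prop := fun cfg cfg' =>
  ∃ (skinApps : Multiset (MCreRule O × ℕ))
    (innerApps : Fin cfg.2.1.length → Multiset (MCreRule O)),
    -- notation
    (let inners := cfg.2.1
     let n := inners.length
     let Dissolved : Fin n → Prop := fun d => ∃ ρ ∈ innerApps d, isDiss ρ
     let consS := (skinApps.map (fun p => mlhs Q.cat p.1)).sum
     let consI : Fin n → Multiset O := fun d => ((innerApps d).map (mlhs Q.cat)).sum
     let inSent : Fin n → Multiset O := fun d =>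
       ((skinApps.filter (fun p => p.2 = (d : ℕ))).map (fun p => inProd p.1)).sum
     let keep : Fin n → Multiset O := fun d =>
       (inners.get d).2 - consI d + ((innerApps d).map (hereProd Q.cat)).sum + inSent d
     -- at least one rule is applied
     (skinApps ≠ 0 ∨ ∃ d, innerApps d ≠ 0) ∧
     -- validity of the skin applications
     (∀ p ∈ skinApps, p.1 ∈ Q.R 1 ∧
        (∀ ca a u j, p.1 = MCreRule.evo ca a u (MTgt.inj j) →
          ∃ h : p.2 < n, (inners.get ⟨p.2, h⟩).1 = j ∧ ¬ Dissolved ⟨p.2, h⟩)) ∧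
     consS ≤ cfg.1 ∧
     -- validity of the inner applications (inner membranes have no children)
     (∀ d : Fin n, ∀ ρ ∈ innerApps d, ρ ∈ Q.R (inners.get d).1 ∧
        (∀ ca a u j, ρ ≠ MCreRule.evo ca a u (MTgt.inj j))) ∧
     (∀ d : Fin n, consI d ≤ (inners.get d).2) ∧
     -- maximality in the skin
     (¬ ∃ ρ ∈ Q.R 1, mlhs Q.cat ρ ≤ cfg.1 - consS ∧
        (∀ ca a u j, ρ = MCreRule.evo ca a u (MTgt.inj j) →
          ∃ d : Fin n, (inners.get d).1 = j ∧ ¬ Dissolved d)) ∧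
     -- maximality in each inner membrane
     (∀ d : Fin n, ¬ ∃ ρ ∈ Q.R (inners.get d).1,
        (∀ ca a u j, ρ ≠ MCreRule.evo ca a u (MTgt.inj j)) ∧
        mlhs Q.cat ρ ≤ (inners.get d).2 - consI d) ∧
     -- the new skin contents
     cfg'.1 = cfg.1 - consS + (skinApps.map (fun p => hereProd Q.cat p.1)).sum +
        (∑ d : Fin n, ((innerApps d).map outProd).sum) +
        (∑ d : Fin n, if Dissolved d then keep d else 0) ∧
     -- the new environment contents
     cfg'.2.2 = cfg.2.2 + (skinApps.map (fun p => outProd p.1)).sum ∧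
     -- the new list of inner membranes: the surviving evolved membranes followed by
     -- the newly created ones
     (∃ creat : List (ℕ × Multiset O),
        (creat : Multiset (ℕ × Multiset O)) =
          (skinApps.map (fun p => createdOf p.1)).sum +
            ∑ d : Fin n, ((innerApps d).map createdOf).sum ∧
        cfg'.2.1 = ((List.finRange n).filterMap (fun d =>
            if Dissolved d then none else some ((inners.get d).1, keep d))) ++ creat))

/-- No rule is applicable anywhere in the configuration. -/
def MHalted (Q : MCreSystem O) (cfg : MCfg O) : Prop :=
  (¬ ∃ ρ ∈ Q.R 1, mlhs Q.cat ρ ≤ cfg.1 ∧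
      (∀ ca a u j, ρ = MCreRule.evo ca a u (MTgt.inj j) →
        ∃ d : Fin cfg.2.1.length, (cfg.2.1.get d).1 = j)) ∧
  (∀ d : Fin cfg.2.1.length, ¬ ∃ ρ ∈ Q.R (cfg.2.1.get d).1,
      (∀ ca a u j, ρ ≠ MCreRule.evo ca a u (MTgt.inj j)) ∧
      mlhs Q.cat ρ ≤ (cfg.2.1.get d).2)

/-- The number of membranes of a configuration. -/
def memCount (cfg : MCfg O) : ℕ := 1 + cfg.2.1.length

/-- The initial configuration: one membrane (the skin) containing `w0`. -/
def minit (Q : MCreSystem O) : MCfg O := (Q.w0, [], 0)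

/-- `Ps(Q)`: the Parikh vectors (w.r.t. the output symbols `a i`) of the environment
contents of halting computations. -/
def MPs {k : ℕ} (Q : MCreSystem O) (a : Fin k → O) : Set (Fin k → ℕ) :=
  { v | ∃ cfg : MCfg O,
      Relation.ReflTransGen (MStep Q) (minit Q) cfg ∧ MHalted Q cfg ∧
      (∀ i, cfg.2.2.count (a i) = v i) ∧ (∀ x ∈ cfg.2.2, ∃ i, x = a i) }

/-! ### The SUB gadget of the membrane-creation construction -/

/-- The objects of the gadget for `l_i : (SUB(r), l_j, l_k)`:
the catalyst `c`, the labels `l_i, l_i', l_i'', l_j, l_k`, the auxiliary objects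
`d, d', d''` and the register symbol `a_r`. -/
inductive H9 : Type
  | c | li | li' | li'' | lj | lk | d | d' | d'' | ar
deriving DecidableEq

open H9 MCreRule MTgt

/-- The P system (fragment) realizing the gadget: skin rules
`c l_i → c [ l_i ]_{r+1}`, `d → d'`, `c a_r → c (a_r, in_{r+1})`,
`d' → (d', in_{r+1})`, `c l_i'' → c l_j`, `d'' → d`, and the rules
`l_i → l_i'`, `a_r → λ δ`, `l_i' → l_i''`, `d' → d''`, `l_i'' → l_k`, `d'' → d δ`
of the created membrane `r + 1`. -/
def Q9 (r : ℕ) : MCreSystem H9 where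
  cat := c
  R := fun i =>
    if i = 1 then
      {create li (r + 1) {li},
       evo false d {d'} MTgt.here,
       evo true ar {ar} (MTgt.inj (r + 1)),
       evo false d' {d'} (MTgt.inj (r + 1)),
       evo true li'' {lj} MTgt.here,
       evo false d'' {d} MTgt.here}
    else if i = r + 1 then
      {evo false li {li'} MTgt.here,
       diss ar 0,
       evo false li' {li''} MTgt.here,
       evo false d' {d''} MTgt.here,
       evo false li'' {lk} MTgt.here,
       diss d'' {d}}
    else ∅
  w0 := {c, li, d}

/-! It suffices to exhibit, for each of the four steps, the multisets of applied rules and to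
check maximality on the objects they leave over. If `k ≥ 1`, the copy of `a_r` sent into
membrane `r + 1` in the second step triggers `a_r → λ δ` in the third, so `l_i'` and `d'` reach
the skin as `l_i''` and `d''`; the other copies of `a_r` stay in the skin because the catalyst
is busy in steps 1, 2 and 4 and their target membrane dissolves in step 3. If `k = 0`, the inner
membrane survives the third step and is dissolved by `d'' → d δ` in the fourth, while `l_i''`
becomes `l_k`. -/

theorem MStep.of_no_inner {Q : MCreSystem O} {w e w' e' : Multiset O}
    {L : List (ℕ × Multiset O)} (S : Multiset (MCreRule O)) (hS : S ≠ 0)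
    (hR : ∀ ρ ∈ S, ρ ∈ Q.R 1 ∧ ∀ ca a u j, ρ ≠ evo ca a u (inj j))
    (hle : (S.map (mlhs Q.cat)).sum ≤ w)
    (hmax : ∀ ρ ∈ Q.R 1, (∀ ca a u j, ρ ≠ evo ca a u (inj j)) →
      ¬ mlhs Q.cat ρ ≤ w - (S.map (mlhs Q.cat)).sum)
    (hw' : w' = w - (S.map (mlhs Q.cat)).sum + (S.map (hereProd Q.cat)).sum)
    (hL : (L : Multiset (ℕ × Multiset O)) = (S.map createdOf).sum)
    (he' : e' = e + (S.map outProd).sum) :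
    MStep Q (w, [], e) (w', L, e') := by
  refine ⟨S.map (·, 0), Fin.elim0, .inl (by simpa using hS), ?_, by simpa using hle,
    (fun i => i.elim0), (fun i => i.elim0), ?_, (fun i => i.elim0), by simpa using hw',
    by simpa using he', L, by simpa using hL, by simp⟩
  · simp only [Multiset.mem_map, forall_exists_index, and_imp]
    rintro _ ρ hρ rfl
    exact ⟨(hR ρ hρ).1, fun ca a u j h => absurd h ((hR ρ hρ).2 ca a u j)⟩
  · rintro ⟨ρ, hρ, hρle, hinj⟩
    refine hmax ρ hρ (fun ca a u j h => ?_) (by simpa using hρle)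
    obtain ⟨i, -⟩ := hinj ca a u j h
    exact i.elim0

theorem MStep.of_single_inner {Q : MCreSystem O} {l : ℕ} {w m e w' e' : Multiset O}
    {L created : List (ℕ × Multiset O)} (S I : Multiset (MCreRule O)) (hne : S ≠ 0 ∨ I ≠ 0)
    (hSR : ∀ ρ ∈ S, ρ ∈ Q.R 1 ∧
      ∀ ca a u j, ρ = evo ca a u (inj j) → j = l ∧ ¬ ∃ σ ∈ I, isDiss σ)
    (hSle : (S.map (mlhs Q.cat)).sum ≤ w)
    (hIR : ∀ ρ ∈ I, ρ ∈ Q.R l ∧ ∀ ca a u j, ρ ≠ evo ca a u (inj j))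
    (hIle : (I.map (mlhs Q.cat)).sum ≤ m)
    (hSmax : ∀ ρ ∈ Q.R 1, mlhs Q.cat ρ ≤ w - (S.map (mlhs Q.cat)).sum →
      ∃ ca a u j, ρ = evo ca a u (inj j) ∧ (j = l → ∃ σ ∈ I, isDiss σ))
    (hImax : ∀ ρ ∈ Q.R l, (∀ ca a u j, ρ ≠ evo ca a u (inj j)) →
      ¬ mlhs Q.cat ρ ≤ m - (I.map (mlhs Q.cat)).sum)
    (hw' : w' = w - (S.map (mlhs Q.cat)).sum + (S.map (hereProd Q.cat)).sum +
      (I.map outProd).sum + if ∃ σ ∈ I, isDiss σ then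
        m - (I.map (mlhs Q.cat)).sum + (I.map (hereProd Q.cat)).sum + (S.map inProd).sum
      else 0)
    (hcreated : (created : Multiset (ℕ × Multiset O)) =
      (S.map createdOf).sum + (I.map createdOf).sum)
    (hL : L = (if ∃ σ ∈ I, isDiss σ then [] else
      [(l, m - (I.map (mlhs Q.cat)).sum + (I.map (hereProd Q.cat)).sum +
        (S.map inProd).sum)]) ++ created)
    (he' : e' = e + (S.map outProd).sum) :
    MStep Q (w, [(l, m)], e) (w', L, e') := by
  have hsent : (((S.map (·, 0)).filter (fun p => p.2 = 0)).map (fun p => inProd p.1)).sum =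
      (S.map inProd).sum := by
    rw [Multiset.filter_eq_self.mpr (by simp)]
    simp
  refine ⟨S.map (·, 0), fun _ => I, ?_, ?_, by simpa using hSle, ?_, ?_, ?_, ?_, ?_,
    by simpa using he', created, by simpa using hcreated, ?_⟩
  · simpa using hne
  · simp only [Multiset.mem_map, forall_exists_index, and_imp]
    rintro _ ρ hρ rfl
    refine ⟨(hSR ρ hρ).1, fun ca a u j h => ?_⟩
    obtain ⟨rfl, hnd⟩ := (hSR ρ hρ).2 ca a u j h
    exact ⟨by simp, rfl, hnd⟩
  · exact Fin.forall_fin_one.mpr hIR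
  · exact Fin.forall_fin_one.mpr hIle
  · rintro ⟨ρ, hρ, hρle, hinj⟩
    obtain ⟨ca, a, u, j, rfl, hj⟩ := hSmax ρ hρ (by simpa using hρle)
    obtain ⟨i, hi, hnd⟩ := hinj ca a u j rfl
    exact hnd (hj (by simpa using hi.symm))
  · exact Fin.forall_fin_one.mpr fun ⟨ρ, hρ, hinj, hρle⟩ => hImax ρ hρ hinj hρle
  · simp [hw', hsent]
  · simp only [hL]
    split_ifs <;> simp [hsent]

theorem mlhs_not_le_zero {α : Type} (c : α) (ρ : MCreRule α) : ¬ mlhs c ρ ≤ 0 := by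
  cases ρ with
  | evo ca => cases ca <;> simp [mlhs]
  | create => simp [mlhs]
  | diss => simp [mlhs]

namespace Q9

theorem R_one (r : ℕ) : (Q9 r).R 1 =
    {create li (r + 1) {li}, evo false d {d'} here, evo true ar {ar} (inj (r + 1)),
      evo false d' {d'} (inj (r + 1)), evo true li'' {lj} here, evo false d'' {d} here} := by
  simp [Q9]

theorem R_succ {r : ℕ} (hr : r ≠ 0) : (Q9 r).R (r + 1) =
    {evo false li {li'} here, diss ar 0, evo false li' {li''} here, evo false d' {d''} here,
      evo false li'' {lk} here, diss d'' {d}} := by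
  simp [Q9, hr]

theorem skin_rule_applicable_cases {r : ℕ} {ρ : MCreRule H9} {w : Multiset H9}
    (hρ : ρ ∈ (Q9 r).R 1) (hle : mlhs c ρ ≤ w) :
    d ∈ w ∨ d' ∈ w ∨ d'' ∈ w ∨
      c ∈ w ∧ (li ∈ w ∨ li'' ∈ w ∨ ar ∈ w ∧ ρ = evo true ar {ar} (inj (r + 1))) := by
  have hmem : ∀ x ∈ mlhs c ρ, x ∈ w := fun _ hx => Multiset.mem_of_le hle hx
  rw [R_one] at hρ
  rcases hρ with rfl | rfl | rfl | rfl | rfl | rfl <;> simp_all [mlhs]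

theorem mstep_create (r k : ℕ) (e : Multiset H9) :
    MStep (Q9 r) ({c, li, d} + Multiset.replicate k ar, [], e)
      ({c, d'} + Multiset.replicate k ar, [(r + 1, {li})], e) := by
  refine MStep.of_no_inner {create li (r + 1) {li}, evo false d {d'} here} (by simp)
    (by simp [R_one]) ?_ (fun ρ hρ _ hle => ?_) ?_ (by simp [createdOf]) (by simp [outProd])
  · rw [Multiset.le_iff_count]; intro x
    cases x <;> simp [Q9, mlhs, Multiset.count_replicate]
  · rcases skin_rule_applicable_cases hρ hle with h | h | h | ⟨h, -⟩ <;>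
      simp [Q9, mlhs, Multiset.mem_replicate] at h
  · ext x
    cases x <;> simp [Q9, mlhs, hereProd, Multiset.count_replicate]

theorem mstep_send (r k : ℕ) (hr : r ≠ 0) (e : Multiset H9) :
    MStep (Q9 r) ({c, d'} + Multiset.replicate (k + 1) ar, [(r + 1, {li})], e)
      ({c} + Multiset.replicate k ar, [(r + 1, {li', ar, d'})], e) := by
  refine MStep.of_single_inner (created := [])
    {evo true ar {ar} (inj (r + 1)), evo false d' {d'} (inj (r + 1))} {evo false li {li'} here}
    (by simp) (by simp [R_one, isDiss]) ?_ (by simp [R_succ hr]) (by simp [Q9, mlhs])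
    (fun ρ hρ hle => ?_) (fun ρ _ _ hle => mlhs_not_le_zero c ρ (by simpa [Q9, mlhs] using hle))
    ?_ (by simp [createdOf]) ?_ (by simp [outProd])
  · rw [Multiset.le_iff_count]; intro x
    cases x <;> simp [Q9, mlhs, Multiset.count_replicate]
  · rcases skin_rule_applicable_cases hρ hle with h | h | h | ⟨h, -⟩ <;>
      simp [Q9, mlhs, Multiset.mem_replicate] at h
  · ext x
    cases x <;> simp [Q9, mlhs, hereProd, outProd, isDiss, Multiset.count_replicate]
  · simp [Q9, mlhs, hereProd, inProd, isDiss]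
    exact Multiset.cons_swap _ _ _

theorem mstep_dissolve (r k : ℕ) (hr : r ≠ 0) (e : Multiset H9) :
    MStep (Q9 r) ({c} + Multiset.replicate k ar, [(r + 1, {li', ar, d'})], e)
      ({c, li'', d''} + Multiset.replicate k ar, [], e) := by
  refine MStep.of_single_inner (created := [])
    0 {evo false li' {li''} here, evo false d' {d''} here, diss ar 0}
    (by simp) (by simp) (by simp) (by simp [R_succ hr]) ?_
    (fun ρ hρ hle => ?_) (fun ρ _ _ hle => mlhs_not_le_zero c ρ (by simpa [Q9, mlhs] using hle))
    ?_ (by simp [createdOf]) (by simp [isDiss]) (by simp)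
  · rw [Multiset.le_iff_count]; intro x
    cases x <;> simp [Q9, mlhs]
  · rcases skin_rule_applicable_cases hρ hle with h | h | h | ⟨-, h | h | ⟨-, rfl⟩⟩ <;>
      try simp [Multiset.mem_replicate] at h
    -- `c a_r → c (a_r, in_{r+1})` is blocked: its target membrane dissolves in this step.
    exact ⟨true, ar, {ar}, r + 1, rfl, fun _ => ⟨diss ar 0, by simp, trivial⟩⟩
  · ext x
    cases x <;> simp [Q9, mlhs, hereProd, outProd, inProd, isDiss, Multiset.count_replicate]

theorem mstep_goto_lj (r k : ℕ) (e : Multiset H9) :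
    MStep (Q9 r) ({c, li'', d''} + Multiset.replicate k ar, [], e)
      ({c, lj, d} + Multiset.replicate k ar, [], e) := by
  refine MStep.of_no_inner {evo true li'' {lj} here, evo false d'' {d} here} (by simp)
    (by simp [R_one]) ?_ (fun ρ hρ _ hle => ?_) ?_ (by simp [createdOf]) (by simp [outProd])
  · rw [Multiset.le_iff_count]; intro x
    cases x <;> simp [Q9, mlhs, Multiset.count_replicate]
  · rcases skin_rule_applicable_cases hρ hle with h | h | h | ⟨h, -⟩ <;>
      simp [Q9, mlhs, Multiset.mem_replicate] at h
  · ext x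
    cases x <;> simp [Q9, mlhs, hereProd, Multiset.count_replicate]

theorem mstep_send_empty (r : ℕ) (hr : r ≠ 0) (e : Multiset H9) :
    MStep (Q9 r) ({c, d'}, [(r + 1, {li})], e) ({c}, [(r + 1, {li', d'})], e) := by
  refine MStep.of_single_inner (created := [])
    {evo false d' {d'} (inj (r + 1))} {evo false li {li'} here}
    (by simp) (by simp [R_one, isDiss]) (by simp [Q9, mlhs]) (by simp [R_succ hr])
    (by simp [Q9, mlhs]) (fun ρ hρ hle => ?_)
    (fun ρ _ _ hle => mlhs_not_le_zero c ρ (by simpa [Q9, mlhs] using hle))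
    (by simp [Q9, mlhs, hereProd, outProd, isDiss]) (by simp [createdOf])
    (by simp [Q9, mlhs, hereProd, inProd, isDiss]) (by simp [outProd])
  rcases skin_rule_applicable_cases hρ hle with h | h | h | ⟨-, h | h | ⟨h, -⟩⟩ <;>
    simp [Q9, mlhs] at h

theorem mstep_wait_empty (r : ℕ) (hr : r ≠ 0) (e : Multiset H9) :
    MStep (Q9 r) ({c}, [(r + 1, {li', d'})], e) ({c}, [(r + 1, {li'', d''})], e) := by
  refine MStep.of_single_inner (created := [])
    0 {evo false li' {li''} here, evo false d' {d''} here}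
    (by simp) (by simp) (by simp) (by simp [R_succ hr]) (by simp [Q9, mlhs])
    (fun ρ hρ hle => ?_)
    (fun ρ _ _ hle => mlhs_not_le_zero c ρ (by simpa [Q9, mlhs] using hle))
    (by simp [isDiss, outProd]) (by simp [createdOf]) (by simp [Q9, mlhs, hereProd, isDiss])
    (by simp)
  rcases skin_rule_applicable_cases hρ hle with h | h | h | ⟨-, h | h | ⟨h, -⟩⟩ <;>
    simp at h

theorem mstep_goto_lk (r : ℕ) (hr : r ≠ 0) (e : Multiset H9) :
    MStep (Q9 r) ({c}, [(r + 1, {li'', d''})], e) ({c, lk, d}, [], e) := by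
  refine MStep.of_single_inner (created := [])
    0 {evo false li'' {lk} here, diss d'' {d}}
    (by simp) (by simp) (by simp) (by simp [R_succ hr]) (by simp [Q9, mlhs])
    (fun ρ hρ hle => ?_)
    (fun ρ _ _ hle => mlhs_not_le_zero c ρ (by simpa [Q9, mlhs] using hle))
    ?_ (by simp [createdOf]) (by simp [isDiss]) (by simp)
  · rcases skin_rule_applicable_cases hρ hle with h | h | h | ⟨-, h | h | ⟨h, -⟩⟩ <;>
      simp at h
  · simp [Q9, mlhs, hereProd, outProd, isDiss]
    exact Multiset.cons_swap _ _ _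

end Q9

/-- correctness of the four-step SUB gadget.  Starting from `c l_i d`
in the skin together with `k` copies of `a_r`, after four steps the system reaches
`c l_j d` with `k - 1` copies of `a_r` if `k ≥ 1`, and `c l_k d` with no copy of
`a_r` if `k = 0`; in both cases no inner membrane and no other objects remain, and
at most two membranes exist at any intermediate time. -/
theorem statement9 (r k : ℕ) (hr : r = 1 ∨ r = 2) (e : Multiset H9)
    (cfg0 : MCfg H9) (h0 : cfg0 = ({c, li, d} + Multiset.replicate k ar, [], e)) :
    (1 ≤ k →
      ∃ c1 c2 c3 : MCfg H9,
        MStep (Q9 r) cfg0 c1 ∧ MStep (Q9 r) c1 c2 ∧ MStep (Q9 r) c2 c3 ∧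
        MStep (Q9 r) c3 ({c, lj, d} + Multiset.replicate (k - 1) ar, [], e) ∧
        memCount c1 ≤ 2 ∧ memCount c2 ≤ 2 ∧ memCount c3 ≤ 2) ∧
    (k = 0 →
      ∃ c1 c2 c3 : MCfg H9,
        MStep (Q9 r) cfg0 c1 ∧ MStep (Q9 r) c1 c2 ∧ MStep (Q9 r) c2 c3 ∧
        MStep (Q9 r) c3 (({c, lk, d} : Multiset H9), [], e) ∧
        memCount c1 ≤ 2 ∧ memCount c2 ≤ 2 ∧ memCount c3 ≤ 2) := by
  have hr0 : r ≠ 0 := by omega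
  subst h0
  refine ⟨fun hk => ?_, fun hk => ?_⟩
  · obtain ⟨m, rfl⟩ := Nat.exists_eq_add_of_le' hk
    exact ⟨_, _, _, Q9.mstep_create r (m + 1) e, Q9.mstep_send r m hr0 e,
      Q9.mstep_dissolve r m hr0 e, Q9.mstep_goto_lj r m e,
      by simp [memCount], by simp [memCount], by simp [memCount]⟩
  · subst hk
    exact ⟨({c, d'}, [(r + 1, {li})], e), _, _, by simpa using Q9.mstep_create r 0 e,
      Q9.mstep_send_empty r hr0 e, Q9.mstep_wait_empty r hr0 e, Q9.mstep_goto_lk r hr0 e,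
      by simp [memCount], by simp [memCount], by simp [memCount]⟩
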